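/- arXiv:2203.10265 — 2 statements merged into one kernel-verified Lean document; each statement's English description precedes it below -/
import Mathlib

section
/- Let X be a finite-dimensional Banach space with numerical radius a norm on L(X), V a subspace of L(X)_w, and T ∈ L(X)_w. Suppose that for every S ∈ V, 0 lies in the convex hull of the set D_S = { x*(Sx) : x* ∈ E_{X*}, x ∈ E_X, |x*(x)| = 1, x*(Tx) = w(T) }. Then T ⊥_w V. -/
variable {𝕜 : Type*} [RCLike 𝕜] {X : Type*} [NormedAddCommGroup X] [NormedSpace 𝕜 X]

/-- The numerical radius of a bounded linear operator on a Banach space. -/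
noncomputable def nrad (T : X →L[𝕜] X) : ℝ :=
  sSup {r : ℝ | ∃ (x : X) (f : X →L[𝕜] 𝕜), ‖x‖ = 1 ∧ ‖f‖ = 1 ∧ f x = 1 ∧ r = ‖f (T x)‖}

/-- The functional `x* ⊗ x : T ↦ x*(Tx)` on `L(X)`. -/
noncomputable def tensor (f : X →L[𝕜] 𝕜) (x : X) : (X →L[𝕜] X) →L[𝕜] 𝕜 :=
  f.comp (ContinuousLinearMap.apply 𝕜 X x)

/-- The dual norm induced on functionals by the numerical radius norm. -/
noncomputable def wdual (g : (X →L[𝕜] X) →L[𝕜] 𝕜) : ℝ :=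
  sSup {r : ℝ | ∃ T : X →L[𝕜] X, nrad T ≤ 1 ∧ r = ‖g T‖}

lemma nrad_nonneg (T : X →L[𝕜] X) : 0 ≤ nrad T := by
  apply Real.sSup_nonneg
  rintro r ⟨x, f, _, _, _, rfl⟩
  positivity

lemma norm_le_nrad (A : X →L[𝕜] X) {x : X} {f : X →L[𝕜] 𝕜} (hx : ‖x‖ = 1) (hf : ‖f‖ = 1)
    (hfx : f x = 1) : ‖f (A x)‖ ≤ nrad A := by
  apply le_csSup
  · refine ⟨‖A‖, ?_⟩
    rintro r ⟨y, g, hy, hg, _, rfl⟩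
    calc ‖g (A y)‖ ≤ ‖g‖ * ‖A y‖ := g.le_opNorm _
      _ ≤ ‖g‖ * (‖A‖ * ‖y‖) := by gcongr; exact A.le_opNorm _
      _ = ‖A‖ := by rw [hg, hy]; ring
  · exact ⟨x, f, hx, hf, hfx, rfl⟩

/-- If `0 ∈ co(D_S)` for every `S ∈ V`, where `D_S` consists of the values `x*(Sx)` over
extreme points attaining `w(T)`, then `T ⊥_w V`. -/
theorem stmt_10 {X : Type*} [NormedAddCommGroup X] [NormedSpace 𝕜 X]
    [NormedSpace ℝ X] [IsScalarTower ℝ 𝕜 X] [FiniteDimensional 𝕜 X]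
    (hw : ∀ T : X →L[𝕜] X, nrad T = 0 → T = 0)
    (V : Submodule 𝕜 (X →L[𝕜] X)) (T : X →L[𝕜] X)
    (h0 : ∀ S ∈ V, (0 : 𝕜) ∈ convexHull ℝ
      {c : 𝕜 | ∃ (f : X →L[𝕜] 𝕜) (x : X),
        f ∈ Set.extremePoints ℝ (Metric.closedBall (0 : X →L[𝕜] 𝕜) 1) ∧
        x ∈ Set.extremePoints ℝ (Metric.closedBall (0 : X) 1) ∧
        ‖f x‖ = 1 ∧ f (T x) = (nrad T : 𝕜) ∧ c = f (S x)}) :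
    ∀ S ∈ V, ∀ c : 𝕜, nrad T ≤ nrad (T + c • S) := by
  intro S hS c
  have hmem := h0 S hS
  rw [convexHull_eq] at hmem
  obtain ⟨ι, t, w, z, hw0, hw1, hz, hc⟩ := hmem
  have hcm : ∑ i ∈ t, w i • z i = (0 : 𝕜) := by
    rw [← Finset.centerMass_eq_of_sum_1 _ _ hw1]; exact hc
  set A := T + c • S with hA
  -- Key: each value is dominated by nrad A
  have key : ∀ i ∈ t, ‖(nrad T : 𝕜) + c * z i‖ ≤ nrad A := by
    intro i hi
    obtain ⟨f, x, hfE, hxE, hfx1, hfT, hzi⟩ := hz i hi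
    have hfle : ‖f‖ ≤ 1 := by
      have := hfE.1; simpa [Metric.mem_closedBall, dist_eq_norm] using this
    have hxle : ‖x‖ ≤ 1 := by
      have := hxE.1; simpa [Metric.mem_closedBall, dist_eq_norm] using this
    have hfx_le : ‖f x‖ ≤ ‖f‖ * ‖x‖ := f.le_opNorm x
    have hxnorm : ‖x‖ = 1 := by
      nlinarith [norm_nonneg f, norm_nonneg x]
    have hfnorm : ‖f‖ = 1 := by
      nlinarith [norm_nonneg f, norm_nonneg x]
    set θ := f x with hθ
    have hθn : ‖θ‖ = 1 := hfx1
    set g := (starRingEnd 𝕜 θ) • f with hg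
    have hgx : g x = 1 := by
      simp only [hg, ContinuousLinearMap.smul_apply, smul_eq_mul, ← hθ, RCLike.conj_mul, hθn]
      norm_num
    have hgnorm : ‖g‖ = 1 := by
      rw [hg, norm_smul ((starRingEnd 𝕜) θ) f]
      simp [RCLike.norm_conj, hθn, hfnorm]
    have hgA : ‖g (A x)‖ = ‖(nrad T : 𝕜) + c * z i‖ := by
      have hfA : f (A x) = (nrad T : 𝕜) + c * z i := by
        simp only [hA, ContinuousLinearMap.add_apply, ContinuousLinearMap.smul_apply,
          map_add, map_smul, hfT, hzi, smul_eq_mul]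
      rw [hg]
      simp only [ContinuousLinearMap.smul_apply, smul_eq_mul, norm_mul, RCLike.norm_conj,
        hθn, one_mul, hfA]
    rw [← hgA]
    exact norm_le_nrad A hxnorm hgnorm hgx
  -- Sum identity
  have hsum : ∑ i ∈ t, w i • ((nrad T : 𝕜) + c * z i) = (nrad T : 𝕜) := by
    have : ∀ i, w i • ((nrad T : 𝕜) + c * z i)
        = w i • (nrad T : 𝕜) + c * (w i • z i) := by
      intro i
      rw [smul_add, mul_smul_comm]
    simp_rw [this]
    rw [Finset.sum_add_distrib, ← Finset.sum_smul, hw1, one_smul,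
      ← Finset.mul_sum, hcm, mul_zero, add_zero]
  calc nrad T = ‖(nrad T : 𝕜)‖ := by
        rw [RCLike.norm_ofReal, abs_of_nonneg (nrad_nonneg T)]
    _ = ‖∑ i ∈ t, w i • ((nrad T : 𝕜) + c * z i)‖ := by rw [hsum]
    _ ≤ ∑ i ∈ t, ‖w i • ((nrad T : 𝕜) + c * z i)‖ := norm_sum_le _ _
    _ ≤ ∑ i ∈ t, w i * nrad A := by
        apply Finset.sum_le_sum
        intro i hi
        rw [norm_smul, Real.norm_of_nonneg (hw0 i hi)]
        exact mul_le_mul_of_nonneg_left (key i hi) (hw0 i hi)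
    _ = nrad A := by rw [← Finset.sum_mul, hw1, one_mul]
end

section
/- Let X be a finite-dimensional Banach space with numerical radius a norm on L(X), Z a subspace of X, and T ∈ L(X)_w nu-smooth with M_{w(T)} = { (μ x₀, conj(μ) x₀*) : |μ| = 1 } for some x₀* ∈ E_{X*}, x₀ ∈ E_X with x₀*(x₀) = 1. If x₀ is a smooth point of X and x₀ ⊥_B Z (Birkhoff–James orthogonality in X), then T ⊥_w L(X, Z), i.e., w(T + λS) ≥ w(T) for all scalars λ and all operators S on X with range in Z. -/
variable {𝕜 : Type*} [RCLike 𝕜] {X : Type*} [NormedAddCommGroup X] [NormedSpace 𝕜 X]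

/-- The set `J_w(T)` of norm-one supporting functionals of `T` in `(L(X)_w)*`. -/
noncomputable def Jw (T : X →L[𝕜] X) : Set ((X →L[𝕜] X) →L[𝕜] 𝕜) :=
  {g | wdual g = 1 ∧ g T = (nrad T : 𝕜)}

/-- The numerical radius attainment set `M_{w(T)}`. -/
noncomputable def Mw (T : X →L[𝕜] X) : Set (X × (X →L[𝕜] 𝕜)) :=
  {p | ‖p.1‖ = 1 ∧ ‖p.2‖ = 1 ∧ p.2 p.1 = 1 ∧ ‖p.2 (T p.1)‖ = nrad T}

/-
A supporting functional of `x₀` that kills `Z` exists by Hahn–Banach applied in `X ⧸ Z`, where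
`x₀ ⊥_B Z` says exactly that the class of `x₀` keeps the norm of `x₀`. Smoothness of `x₀` forces
this functional to be `x₀*`, and `(x₀, x₀*)` attains `w(T)`. For `S` with range in `Z`,
`x₀*((T + λS)x₀) = x₀*(Tx₀)`, so `w(T) = |x₀*(Tx₀)| ≤ w(T + λS)`.
-/

theorem exists_dual_vector_forall_mem_eq_zero {E : Type*} [SeminormedAddCommGroup E]
    [NormedSpace 𝕜 E] {x : E} (hx : ‖x‖ ≠ 0) {Z : Submodule 𝕜 E}
    (hZ : ∀ z ∈ Z, ‖x‖ ≤ ‖x + z‖) :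
    ∃ f : E →L[𝕜] 𝕜, ‖f‖ = 1 ∧ f x = ‖x‖ ∧ ∀ z ∈ Z, f z = 0 := by
  have hq : ‖(Submodule.Quotient.mk x : E ⧸ Z)‖ = ‖x‖ := by
    refine le_antisymm (Submodule.Quotient.norm_mk_le Z x)
      (QuotientAddGroup.le_norm_iff.2 fun m hm => ?_)
    simpa using hZ _ ((Submodule.Quotient.eq Z).1 hm)
  obtain ⟨g, hg1, hgx⟩ := exists_dual_vector 𝕜 (Submodule.Quotient.mk x : E ⧸ Z) (hq ▸ hx)
  have hfx : (g.comp Z.mkQL) x = ‖x‖ := by simpa [hq] using hgx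
  have hf_le : ‖g.comp Z.mkQL‖ ≤ 1 :=
    ContinuousLinearMap.opNorm_le_bound _ zero_le_one fun y => by
      simpa [hg1] using (g.le_opNorm _).trans
        (by simpa [hg1] using Submodule.Quotient.norm_mk_le Z y)
  have hf_ge : 1 ≤ ‖g.comp Z.mkQL‖ := by
    have := (g.comp Z.mkQL).le_opNorm x
    rw [hfx, RCLike.norm_ofReal, abs_norm] at this
    exact (le_mul_iff_one_le_left ((norm_nonneg x).lt_of_ne' hx)).1 this
  refine ⟨g.comp Z.mkQL, le_antisymm hf_le hf_ge, hfx, fun z hz => ?_⟩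
  simp [(Submodule.Quotient.mk_eq_zero Z).2 hz]

theorem norm_apply_le_nrad {x : X} {f : X →L[𝕜] 𝕜} (hx : ‖x‖ = 1) (hf : ‖f‖ = 1) (hfx : f x = 1)
    (A : X →L[𝕜] X) : ‖f (A x)‖ ≤ nrad A := by
  have hbdd : BddAbove {r : ℝ | ∃ (x : X) (f : X →L[𝕜] 𝕜),
      ‖x‖ = 1 ∧ ‖f‖ = 1 ∧ f x = 1 ∧ r = ‖f (A x)‖} := by
    refine ⟨‖A‖, ?_⟩
    rintro r ⟨y, g, hy, hg, -, rfl⟩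
    calc ‖g (A y)‖ ≤ ‖g‖ * (‖A‖ * ‖y‖) :=
          (g.le_opNorm _).trans (mul_le_mul_of_nonneg_left (A.le_opNorm y) (norm_nonneg _))
      _ = ‖A‖ := by rw [hy, hg]; ring
  exact le_csSup hbdd ⟨x, f, hx, hf, hfx, rfl⟩

theorem nrad_le_nrad_add_of_mem_Mw {T S : X →L[𝕜] X} {p : X × (X →L[𝕜] 𝕜)} (hp : p ∈ Mw T)
    (hS : p.2 (S p.1) = 0) : nrad T ≤ nrad (T + S) := by
  obtain ⟨hx, hf, hfx, hT⟩ := hp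
  calc nrad T = ‖p.2 ((T + S) p.1)‖ := by simp [hS, hT]
    _ ≤ nrad (T + S) := norm_apply_le_nrad hx hf hfx _

theorem stmt_19_general {X : Type*} [NormedAddCommGroup X] [NormedSpace 𝕜 X]
    (Z : Submodule 𝕜 X) (T : X →L[𝕜] X)
    (x₀ : X) (f₀ : X →L[𝕜] 𝕜)
    (hM : Mw T = {p | ∃ μ : 𝕜, ‖μ‖ = 1 ∧ p = (μ • x₀, (starRingEnd 𝕜 μ) • f₀)})
    (hsmooth : ∃ g : X →L[𝕜] 𝕜, {f : X →L[𝕜] 𝕜 | ‖f‖ = 1 ∧ f x₀ = (‖x₀‖ : 𝕜)} = {g})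
    (hBJ : ∀ z ∈ Z, ∀ c : 𝕜, ‖x₀‖ ≤ ‖x₀ + c • z‖) :
    ∀ S : X →L[𝕜] X, (∀ v : X, S v ∈ Z) → ∀ c : 𝕜, nrad T ≤ nrad (T + c • S) := by
  intro S hS c
  have hmem : (x₀, f₀) ∈ Mw T := hM ▸ ⟨1, by simp, by simp⟩
  obtain ⟨hx₀, hf₀, hfx, -⟩ := id hmem
  dsimp only at hx₀ hf₀ hfx
  obtain ⟨f, hf, hfx', hfZ⟩ := exists_dual_vector_forall_mem_eq_zero (x := x₀) (by simp [hx₀])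
    fun z hz => by simpa using hBJ z hz 1
  have hff₀ : f = f₀ := by
    obtain ⟨g, hg⟩ := hsmooth
    have hJ : Set.Subsingleton {f : X →L[𝕜] 𝕜 | ‖f‖ = 1 ∧ f x₀ = (‖x₀‖ : 𝕜)} :=
      hg ▸ Set.subsingleton_singleton
    exact hJ ⟨hf, hfx'⟩ ⟨hf₀, by simp [hfx, hx₀]⟩
  subst hff₀
  exact nrad_le_nrad_add_of_mem_Mw hmem (by simp [hfZ _ (hS x₀)])

/-- If `T` is nu-smooth with `M_{w(T)} = {(μx₀, conj(μ)x₀*)}`, `x₀` is a smooth point of `X`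
and `x₀ ⊥_B Z`, then `T ⊥_w L(X,Z)`. -/
theorem stmt_19 {X : Type*} [NormedAddCommGroup X] [NormedSpace 𝕜 X]
    [NormedSpace ℝ X] [IsScalarTower ℝ 𝕜 X] [FiniteDimensional 𝕜 X]
    (hw : ∀ T : X →L[𝕜] X, nrad T = 0 → T = 0)
    (Z : Submodule 𝕜 X) (T : X →L[𝕜] X) (hsm : ∃ g, Jw T = {g})
    (x₀ : X) (f₀ : X →L[𝕜] 𝕜)
    (hx₀ : x₀ ∈ Set.extremePoints ℝ (Metric.closedBall (0 : X) 1))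
    (hf₀ : f₀ ∈ Set.extremePoints ℝ (Metric.closedBall (0 : X →L[𝕜] 𝕜) 1))
    (hfx : f₀ x₀ = 1)
    (hM : Mw T = {p | ∃ μ : 𝕜, ‖μ‖ = 1 ∧ p = (μ • x₀, (starRingEnd 𝕜 μ) • f₀)})
    (hsmooth : ∃ g : X →L[𝕜] 𝕜, {f : X →L[𝕜] 𝕜 | ‖f‖ = 1 ∧ f x₀ = (‖x₀‖ : 𝕜)} = {g})
    (hBJ : ∀ z ∈ Z, ∀ c : 𝕜, ‖x₀‖ ≤ ‖x₀ + c • z‖) :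
    ∀ S : X →L[𝕜] X, (∀ v : X, S v ∈ Z) → ∀ c : 𝕜, nrad T ≤ nrad (T + c • S) :=
  stmt_19_general Z T x₀ f₀ hM hsmooth hBJ
end
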